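/- arXiv:1711.01086 — 2 statements merged into one kernel-verified Lean document; each statement's English description precedes it below -/
import Mathlib

section
/- If G is a connected graph of order n ≥ 7 with diam(G) ≥ 4, then η_p(G) ≤ n − 3. -/
open SimpleGraph Set

/-- Distance from a vertex to a set of vertices. -/
noncomputable def pDist {V : Type*} (G : SimpleGraph V) (v : V) (S : Set V) : ℕ :=
  sInf (G.dist v '' S)

/-- A family of sets of vertices is resolving if every pair of distinct vertices
is distinguished by its distance to some part. -/
def IsResolvingFam {V : Type*} (G : SimpleGraph V) (P : Set (Set V)) : Prop :=
  ∀ u v : V, u ≠ v → ∃ S ∈ P, pDist G u S ≠ pDist G v S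

/-- A family of sets is dominating if every vertex is at distance exactly 1 from some part. -/
def IsDominatingFam {V : Type*} (G : SimpleGraph V) (P : Set (Set V)) : Prop :=
  ∀ v : V, ∃ S ∈ P, pDist G v S = 1

/-- The partition domination number: minimum cardinality of a dominating partition. -/
noncomputable def gammaP {V : Type*} (G : SimpleGraph V) : ℕ :=
  sInf {k | ∃ P : Set (Set V), Setoid.IsPartition P ∧ IsDominatingFam G P ∧ P.ncard = k}

/-- The partition dimension: minimum cardinality of a resolving partition. -/
noncomputable def betaP {V : Type*} (G : SimpleGraph V) : ℕ :=
  sInf {k | ∃ P : Set (Set V), Setoid.IsPartition P ∧ IsResolvingFam G P ∧ P.ncard = k}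

/-- The dominating partition dimension: minimum cardinality of a resolving dominating partition. -/
noncomputable def etaP {V : Type*} (G : SimpleGraph V) : ℕ :=
  sInf {k | ∃ P : Set (Set V), Setoid.IsPartition P ∧ IsResolvingFam G P ∧
    IsDominatingFam G P ∧ P.ncard = k}

/-- A resolving set of vertices. -/
def IsResolvingSet {V : Type*} (G : SimpleGraph V) (S : Set V) : Prop :=
  ∀ u v : V, u ≠ v → ∃ x ∈ S, G.dist u x ≠ G.dist v x

/-- A dominating set of vertices. -/
def IsDominatingSet {V : Type*} (G : SimpleGraph V) (S : Set V) : Prop :=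
  ∀ v : V, v ∉ S → ∃ u ∈ S, G.Adj u v

/-- The resolving domination number η(G). -/
noncomputable def etaNum {V : Type*} (G : SimpleGraph V) : ℕ :=
  sInf {k | ∃ S : Set V, IsResolvingSet G S ∧ IsDominatingSet G S ∧ S.ncard = k}

/-- A twin set: pairwise twin vertices. -/
def IsTwinSet {V : Type*} (G : SimpleGraph V) (W : Set V) : Prop :=
  ∀ u ∈ W, ∀ v ∈ W, ∀ w : V, w ≠ u → w ≠ v → G.dist u w = G.dist v w

/-- The join of two graphs. -/
def gJoin {α β : Type*} (G : SimpleGraph α) (H : SimpleGraph β) : SimpleGraph (α ⊕ β) :=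
  SimpleGraph.fromRel (fun x y =>
    (∃ a b, x = Sum.inl a ∧ y = Sum.inl b ∧ G.Adj a b) ∨
    (∃ a b, x = Sum.inr a ∧ y = Sum.inr b ∧ H.Adj a b) ∨
    (∃ a b, x = Sum.inl a ∧ y = Sum.inr b))

/-- The disjoint union of two graphs. -/
def gUnion {α β : Type*} (G : SimpleGraph α) (H : SimpleGraph β) : SimpleGraph (α ⊕ β) :=
  SimpleGraph.fromRel (fun x y =>
    (∃ a b, x = Sum.inl a ∧ y = Sum.inl b ∧ G.Adj a b) ∨
    (∃ a b, x = Sum.inr a ∧ y = Sum.inr b ∧ H.Adj a b))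

lemma tri_helper {V : Type*} (A B C : Set V) (v u : V)
    (h1 : v ∈ A → u ∉ A) (h2 : v ∈ B → u ∉ B) (h3 : v ∈ C → u ∉ C) :
    ∀ S ∈ ({A, B, C} : Set (Set V)), v ∈ S → u ∉ S := by
  intro S hS
  simp only [Set.mem_insert_iff, Set.mem_singleton_iff] at hS
  rcases hS with h | h | h <;> subst h <;> assumption

lemma pDist_le (hw : w ∈ S) : pDist G v S ≤ G.dist v w :=
  Nat.sInf_le ⟨w, hw, rfl⟩

lemma pDist_self (hv : v ∈ S) : pDist G v S = 0 :=
  Nat.le_zero.mp (le_of_le_of_eq (pDist_le hv) (SimpleGraph.dist_self))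

lemma pDist_ne_zero (hG : G.Connected) (hS : S.Nonempty) (hv : v ∉ S) :
    pDist G v S ≠ 0 := by
  rw [pDist, Ne, Nat.sInf_eq_zero]
  rintro (⟨w, hw, hd⟩ | he)
  · exact (hG.pos_dist_of_ne (fun h : v = w => hv (h ▸ hw))).ne' hd
  · exact (hS.image _).ne_empty he

lemma pDist_eq_one (hG : G.Connected) (hadj : G.Adj v u) (hu : u ∈ S) (hv : v ∉ S) :
    pDist G v S = 1 := by
  have h1 : pDist G v S ≤ 1 := by
    have := pDist_le (v := v) (G := G) hu
    have hd : G.dist v u = 1 := SimpleGraph.dist_eq_one_iff_adj.mpr hadj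
    omega
  have h2 := pDist_ne_zero hG ⟨u, hu⟩ hv
  omega

lemma pDist_pair (v p q : V) : pDist G v {p, q} = min (G.dist v p) (G.dist v q) := by
  rw [pDist, Set.image_pair]
  refine le_antisymm (le_min (Nat.sInf_le (by simp)) (Nat.sInf_le (by simp))) ?_
  rcases Nat.sInf_mem (⟨G.dist v p, by simp⟩ : Set.Nonempty {G.dist v p, G.dist v q}) with h | h
  · rw [h]; exact min_le_left _ _
  · rw [h]; exact min_le_right _ _

lemma exists_adj {V : Type*} [Fintype V] {G : SimpleGraph V} (hG : G.Connected)
    (hcard : 2 ≤ Fintype.card V) (v : V) : ∃ u, G.Adj v u := by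
  obtain ⟨w, hw⟩ := Fintype.exists_ne_of_one_lt_card (by omega) v
  obtain ⟨p⟩ := hG v w
  cases p with
  | nil => exact absurd rfl hw.symm
  | cons h q => exact ⟨_, h⟩


lemma master {V : Type*} [Fintype V] (G : SimpleGraph V) (hG : G.Connected)
    (hn : 7 ≤ Fintype.card V) (a₁ b₁ a₂ b₂ a₃ b₃ : V)
    (hab1 : a₁ ≠ b₁) (h12 : a₁ ≠ a₂) (h1b2 : a₁ ≠ b₂) (h13 : a₁ ≠ a₃) (h1b3 : a₁ ≠ b₃)
    (hb12 : b₁ ≠ a₂) (hb1b2 : b₁ ≠ b₂) (hb13 : b₁ ≠ a₃) (hb1b3 : b₁ ≠ b₃)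
    (hab2 : a₂ ≠ b₂) (h23 : a₂ ≠ a₃) (h2b3 : a₂ ≠ b₃) (hb23 : b₂ ≠ a₃) (hb2b3 : b₂ ≠ b₃)
    (hab3 : a₃ ≠ b₃)
    (hres1 : ∃ S ∈ ({{a₁,b₁},{a₂,b₂},{a₃,b₃}} : Set (Set V)), pDist G a₁ S ≠ pDist G b₁ S)
    (hres2 : ∃ S ∈ ({{a₁,b₁},{a₂,b₂},{a₃,b₃}} : Set (Set V)), pDist G a₂ S ≠ pDist G b₂ S)
    (hres3 : ∃ S ∈ ({{a₁,b₁},{a₂,b₂},{a₃,b₃}} : Set (Set V)), pDist G a₃ S ≠ pDist G b₃ S)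
    (hdom : ∀ v ∈ ({a₁,b₁,a₂,b₂,a₃,b₃} : Set V), ∃ u, G.Adj v u ∧
      ∀ S ∈ ({{a₁,b₁},{a₂,b₂},{a₃,b₃}} : Set (Set V)), v ∈ S → u ∉ S) :
    etaP G ≤ Fintype.card V - 3 := by
  classical
  obtain ⟨p1, hp1def⟩ : ∃ p : Set V, p = {a₁, b₁} := ⟨_, rfl⟩
  obtain ⟨p2, hp2def⟩ : ∃ p : Set V, p = {a₂, b₂} := ⟨_, rfl⟩
  obtain ⟨p3, hp3def⟩ : ∃ p : Set V, p = {a₃, b₃} := ⟨_, rfl⟩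
  obtain ⟨C6, hC6def⟩ : ∃ c : Set V, c = {a₁, b₁, a₂, b₂, a₃, b₃} := ⟨_, rfl⟩
  obtain ⟨Q, hQdef⟩ : ∃ q : Set (Set V),
      q = {p1, p2, p3} ∪ (fun w => ({w} : Set V)) '' C6ᶜ := ⟨_, rfl⟩
  have hma1 : a₁ ∈ p1 := by rw [hp1def]; exact Or.inl rfl
  have hmb1 : b₁ ∈ p1 := by rw [hp1def]; exact Or.inr rfl
  have hma2 : a₂ ∈ p2 := by rw [hp2def]; exact Or.inl rfl
  have hmb2 : b₂ ∈ p2 := by rw [hp2def]; exact Or.inr rfl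
  have hma3 : a₃ ∈ p3 := by rw [hp3def]; exact Or.inl rfl
  have hmb3 : b₃ ∈ p3 := by rw [hp3def]; exact Or.inr rfl
  have hp1mem : ∀ x, x ∈ p1 ↔ x = a₁ ∨ x = b₁ := by intro x; rw [hp1def]; simp
  have hp2mem : ∀ x, x ∈ p2 ↔ x = a₂ ∨ x = b₂ := by intro x; rw [hp2def]; simp
  have hp3mem : ∀ x, x ∈ p3 ↔ x = a₃ ∨ x = b₃ := by intro x; rw [hp3def]; simp
  have hC6mem : ∀ x, x ∈ C6 ↔ x ∈ p1 ∨ x ∈ p2 ∨ x ∈ p3 := by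
    intro x; rw [hC6def, hp1mem, hp2mem, hp3mem]; simp [or_assoc]
  have hd12 : ∀ x, x ∈ p1 → x ∈ p2 → False := by
    intro x hx1 hx2
    rcases (hp1mem x).mp hx1 with rfl | rfl <;> rcases (hp2mem x).mp hx2 with h | h
    exacts [h12 h, h1b2 h, hb12 h, hb1b2 h]
  have hd13 : ∀ x, x ∈ p1 → x ∈ p3 → False := by
    intro x hx1 hx2
    rcases (hp1mem x).mp hx1 with rfl | rfl <;> rcases (hp3mem x).mp hx2 with h | h
    exacts [h13 h, h1b3 h, hb13 h, hb1b3 h]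
  have hd23 : ∀ x, x ∈ p2 → x ∈ p3 → False := by
    intro x hx1 hx2
    rcases (hp2mem x).mp hx1 with rfl | rfl <;> rcases (hp3mem x).mp hx2 with h | h
    exacts [h23 h, h2b3 h, hb23 h, hb2b3 h]
  have hp1Q : p1 ∈ Q := by rw [hQdef]; exact Or.inl (Or.inl rfl)
  have hp2Q : p2 ∈ Q := by rw [hQdef]; exact Or.inl (Or.inr (Or.inl rfl))
  have hp3Q : p3 ∈ Q := by rw [hQdef]; exact Or.inl (Or.inr (Or.inr rfl))
  have hsingQ : ∀ w, w ∉ C6 → ({w} : Set V) ∈ Q := by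
    intro w hw; rw [hQdef]; exact Or.inr ⟨w, hw, rfl⟩
  have hQcases : ∀ S ∈ Q, S = p1 ∨ S = p2 ∨ S = p3 ∨ ∃ w, w ∉ C6 ∧ S = {w} := by
    rw [hQdef]
    rintro S (hS | ⟨w, hw, rfl⟩)
    · rcases hS with h | h | h
      exacts [Or.inl h, Or.inr (Or.inl h), Or.inr (Or.inr (Or.inl h))]
    · exact Or.inr (Or.inr (Or.inr ⟨w, hw, rfl⟩))
  have hpart : ∀ v : V, ∃ S, (S ∈ Q ∧ v ∈ S) ∧ ∀ T, (T ∈ Q ∧ v ∈ T) → T = S := by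
    intro v
    by_cases hv : v ∈ C6
    · rcases (hC6mem v).mp hv with hvi | hvi | hvi
      · refine ⟨p1, ⟨hp1Q, hvi⟩, ?_⟩
        rintro T ⟨hTQ, hvT⟩
        rcases hQcases T hTQ with rfl | rfl | rfl | ⟨w, hw, rfl⟩
        · rfl
        · exact absurd hvT (fun h => hd12 v hvi h)
        · exact absurd hvT (fun h => hd13 v hvi h)
        · rcases hvT with rfl; exact absurd hv hw
      · refine ⟨p2, ⟨hp2Q, hvi⟩, ?_⟩
        rintro T ⟨hTQ, hvT⟩
        rcases hQcases T hTQ with rfl | rfl | rfl | ⟨w, hw, rfl⟩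
        · exact absurd hvT (fun h => hd12 v h hvi)
        · rfl
        · exact absurd hvT (fun h => hd23 v hvi h)
        · rcases hvT with rfl; exact absurd hv hw
      · refine ⟨p3, ⟨hp3Q, hvi⟩, ?_⟩
        rintro T ⟨hTQ, hvT⟩
        rcases hQcases T hTQ with rfl | rfl | rfl | ⟨w, hw, rfl⟩
        · exact absurd hvT (fun h => hd13 v h hvi)
        · exact absurd hvT (fun h => hd23 v h hvi)
        · rfl
        · rcases hvT with rfl; exact absurd hv hw
    · refine ⟨{v}, ⟨hsingQ v hv, rfl⟩, ?_⟩
      rintro T ⟨hTQ, hvT⟩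
      rcases hQcases T hTQ with rfl | rfl | rfl | ⟨w, hw, rfl⟩
      · exact absurd ((hC6mem v).mpr (Or.inl hvT)) hv
      · exact absurd ((hC6mem v).mpr (Or.inr (Or.inl hvT))) hv
      · exact absurd ((hC6mem v).mpr (Or.inr (Or.inr hvT))) hv
      · rcases hvT with rfl; rfl
  have hQpartition : Setoid.IsPartition Q := by
    constructor
    · intro hS
      rcases hQcases ∅ hS with h | h | h | ⟨w, hw, h⟩
      · exact (h ▸ hma1 : a₁ ∈ (∅ : Set V))
      · exact (h ▸ hma2 : a₂ ∈ (∅ : Set V))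
      · exact (h ▸ hma3 : a₃ ∈ (∅ : Set V))
      · exact ((h.symm ▸ rfl : w ∈ (∅ : Set V)))
    · intro a
      obtain ⟨S, hS, hu⟩ := hpart a
      exact ⟨S, hS, fun T hT => hu T hT⟩
  have hQne : ∀ S ∈ Q, S.Nonempty := by
    intro S hS
    rcases hQcases S hS with rfl | rfl | rfl | ⟨w, hw, rfl⟩
    exacts [⟨a₁, hma1⟩, ⟨a₂, hma2⟩, ⟨a₃, hma3⟩, ⟨w, rfl⟩]
  have key : ∀ S ∈ Q, ∀ x y : V, x ∈ S → y ∉ S →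
      ∃ T ∈ Q, pDist G x T ≠ pDist G y T := by
    intro S hS x y hx hy
    refine ⟨S, hS, ?_⟩
    rw [pDist_self hx]
    exact fun h => pDist_ne_zero hG (hQne S hS) hy h.symm
  have hresQ : IsResolvingFam G Q := by
    intro u v huv
    by_cases hu : u ∈ C6
    · by_cases hv : v ∈ C6
      · rcases (hC6mem u).mp hu with hui | hui | hui <;>
          rcases (hC6mem v).mp hv with hvi | hvi | hvi
        · -- both in p1
          rcases (hp1mem u).mp hui with rfl | rfl <;> rcases (hp1mem v).mp hvi with rfl | rfl
          · exact absurd rfl huv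
          · obtain ⟨S, hS, hne⟩ := hres1
            rw [← hp1def, ← hp2def, ← hp3def] at hS
            simp only [Set.mem_insert_iff, Set.mem_singleton_iff] at hS
            rcases hS with h | h | h
            exacts [⟨p1, hp1Q, h ▸ hne⟩, ⟨p2, hp2Q, h ▸ hne⟩, ⟨p3, hp3Q, h ▸ hne⟩]
          · obtain ⟨S, hS, hne⟩ := hres1
            rw [← hp1def, ← hp2def, ← hp3def] at hS
            simp only [Set.mem_insert_iff, Set.mem_singleton_iff] at hS
            rcases hS with h | h | h
            exacts [⟨p1, hp1Q, h ▸ hne.symm⟩, ⟨p2, hp2Q, h ▸ hne.symm⟩, ⟨p3, hp3Q, h ▸ hne.symm⟩]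
          · exact absurd rfl huv
        · exact key p1 hp1Q u v hui (fun h => hd12 v h hvi)
        · exact key p1 hp1Q u v hui (fun h => hd13 v h hvi)
        · exact key p2 hp2Q u v hui (fun h => hd12 v hvi h)
        · -- both in p2
          rcases (hp2mem u).mp hui with rfl | rfl <;> rcases (hp2mem v).mp hvi with rfl | rfl
          · exact absurd rfl huv
          · obtain ⟨S, hS, hne⟩ := hres2
            rw [← hp1def, ← hp2def, ← hp3def] at hS
            simp only [Set.mem_insert_iff, Set.mem_singleton_iff] at hS
            rcases hS with h | h | h
            exacts [⟨p1, hp1Q, h ▸ hne⟩, ⟨p2, hp2Q, h ▸ hne⟩, ⟨p3, hp3Q, h ▸ hne⟩]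
          · obtain ⟨S, hS, hne⟩ := hres2
            rw [← hp1def, ← hp2def, ← hp3def] at hS
            simp only [Set.mem_insert_iff, Set.mem_singleton_iff] at hS
            rcases hS with h | h | h
            exacts [⟨p1, hp1Q, h ▸ hne.symm⟩, ⟨p2, hp2Q, h ▸ hne.symm⟩, ⟨p3, hp3Q, h ▸ hne.symm⟩]
          · exact absurd rfl huv
        · exact key p2 hp2Q u v hui (fun h => hd23 v h hvi)
        · exact key p3 hp3Q u v hui (fun h => hd13 v hvi h)
        · exact key p3 hp3Q u v hui (fun h => hd23 v hvi h)
        · -- both in p3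
          rcases (hp3mem u).mp hui with rfl | rfl <;> rcases (hp3mem v).mp hvi with rfl | rfl
          · exact absurd rfl huv
          · obtain ⟨S, hS, hne⟩ := hres3
            rw [← hp1def, ← hp2def, ← hp3def] at hS
            simp only [Set.mem_insert_iff, Set.mem_singleton_iff] at hS
            rcases hS with h | h | h
            exacts [⟨p1, hp1Q, h ▸ hne⟩, ⟨p2, hp2Q, h ▸ hne⟩, ⟨p3, hp3Q, h ▸ hne⟩]
          · obtain ⟨S, hS, hne⟩ := hres3
            rw [← hp1def, ← hp2def, ← hp3def] at hS
            simp only [Set.mem_insert_iff, Set.mem_singleton_iff] at hS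
            rcases hS with h | h | h
            exacts [⟨p1, hp1Q, h ▸ hne.symm⟩, ⟨p2, hp2Q, h ▸ hne.symm⟩, ⟨p3, hp3Q, h ▸ hne.symm⟩]
          · exact absurd rfl huv
      · obtain ⟨T, hT, hne⟩ := key {v} (hsingQ v hv) v u rfl
          (fun h => huv (Set.mem_singleton_iff.mp h))
        exact ⟨T, hT, hne.symm⟩
    · exact key {u} (hsingQ u hu) u v rfl (fun h => huv.symm (Set.mem_singleton_iff.mp h))
  have hdomQ : IsDominatingFam G Q := by
    intro v
    by_cases hv : v ∈ C6
    · have hv' : v ∈ ({a₁,b₁,a₂,b₂,a₃,b₃} : Set V) := hC6def ▸ hv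
      obtain ⟨u, hadj, hforb⟩ := hdom v hv'
      obtain ⟨S, ⟨hSQ, huS⟩, -⟩ := hpart u
      refine ⟨S, hSQ, pDist_eq_one hG hadj huS ?_⟩
      intro hvS
      rcases hQcases S hSQ with h | h | h | ⟨w, hw, h⟩
      · exact hforb p1 (Or.inl hp1def) (h ▸ hvS) (h ▸ huS)
      · exact hforb p2 (Or.inr (Or.inl hp2def)) (h ▸ hvS) (h ▸ huS)
      · exact hforb p3 (Or.inr (Or.inr (Set.mem_singleton_iff.mpr hp3def))) (h ▸ hvS) (h ▸ huS)
      · rw [h] at hvS; rcases hvS with rfl; exact hw hv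
    · obtain ⟨u, hadj⟩ := exists_adj hG (by omega) v
      obtain ⟨S, ⟨hSQ, huS⟩, -⟩ := hpart u
      refine ⟨S, hSQ, pDist_eq_one hG hadj huS ?_⟩
      intro hvS
      rcases hQcases S hSQ with h | h | h | ⟨w, hw, h⟩
      · exact hv ((hC6mem v).mpr (Or.inl (h ▸ hvS)))
      · exact hv ((hC6mem v).mpr (Or.inr (Or.inl (h ▸ hvS))))
      · exact hv ((hC6mem v).mpr (Or.inr (Or.inr (h ▸ hvS))))
      · rw [h] at hvS huS; rcases hvS with rfl
        exact hadj.ne (Set.mem_singleton_iff.mp huS).symm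
  have hcard : Q.ncard = Fintype.card V - 3 := by
    have hp12 : p1 ≠ p2 := fun h => hd12 a₁ hma1 (h ▸ hma1)
    have hp13 : p1 ≠ p3 := fun h => hd13 a₁ hma1 (h ▸ hma1)
    have hp23 : p2 ≠ p3 := fun h => hd23 a₂ hma2 (h ▸ hma2)
    have h3 : ({p1, p2, p3} : Set (Set V)).ncard = 3 := by
      rw [Set.ncard_insert_of_notMem (by simp [hp12, hp13]) (Set.toFinite _),
        Set.ncard_pair hp23]
    have himg : ((fun w => ({w} : Set V)) '' C6ᶜ).ncard = C6ᶜ.ncard :=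
      Set.ncard_image_of_injective _ (fun x y h => Set.singleton_injective h)
    have hC6card : C6.ncard = 6 := by
      rw [hC6def,
        Set.ncard_insert_of_notMem (by simp [hab1, h12, h1b2, h13, h1b3]) (Set.toFinite _),
        Set.ncard_insert_of_notMem (by simp [hb12, hb1b2, hb13, hb1b3]) (Set.toFinite _),
        Set.ncard_insert_of_notMem (by simp [hab2, h23, h2b3]) (Set.toFinite _),
        Set.ncard_insert_of_notMem (by simp [hb23, hb2b3]) (Set.toFinite _),
        Set.ncard_pair hab3]
    have hcompl : C6ᶜ.ncard = Fintype.card V - 6 := by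
      have h := Set.ncard_add_ncard_compl C6 (Set.toFinite _) (Set.toFinite _)
      rw [hC6card, Nat.card_eq_fintype_card] at h; omega
    have hdisjQ : Disjoint ({p1, p2, p3} : Set (Set V))
        ((fun w => ({w} : Set V)) '' C6ᶜ) := by
      rw [Set.disjoint_left]
      rintro S hS ⟨w, hw, rfl⟩
      simp only [Set.mem_insert_iff, Set.mem_singleton_iff] at hS
      rcases hS with h | h | h
      · exact hw ((hC6mem w).mpr (Or.inl (h ▸ (rfl : w ∈ ({w} : Set V)))))
      · exact hw ((hC6mem w).mpr (Or.inr (Or.inl (h ▸ (rfl : w ∈ ({w} : Set V))))))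
      · exact hw ((hC6mem w).mpr (Or.inr (Or.inr (h ▸ (rfl : w ∈ ({w} : Set V))))))
    rw [hQdef, Set.ncard_union_eq hdisjQ (Set.toFinite _) (Set.toFinite _), h3, himg, hcompl]
    omega
  have hmem : Fintype.card V - 3 ∈ {k | ∃ P : Set (Set V), Setoid.IsPartition P ∧
      IsResolvingFam G P ∧ IsDominatingFam G P ∧ P.ncard = k} :=
    ⟨Q, hQpartition, hresQ, hdomQ, hcard⟩
  exact Nat.sInf_le hmem

lemma dist_getVert_le {V : Type*} {G : SimpleGraph V} (hG : G.Connected) {u v : V}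
    (p : G.Walk u v) (i j : ℕ) (hij : i ≤ j) (hj : j ≤ p.length) :
    G.dist (p.getVert i) (p.getVert j) ≤ j - i := by
  induction j with
  | zero =>
    have h : i = 0 := Nat.le_zero.mp hij
    subst h; simp [SimpleGraph.dist_self]
  | succ n ih =>
    rcases Nat.eq_or_lt_of_le hij with h | h
    · subst h; simp [SimpleGraph.dist_self]
    · have hin : i ≤ n := by omega
      have h1 := ih hin (by omega)
      have h2 : G.dist (p.getVert n) (p.getVert (n+1)) ≤ 1 := by
        have := SimpleGraph.dist_eq_one_iff_adj.mpr (p.adj_getVert_succ (by omega : n < p.length))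
        omega
      have h3 := hG.dist_triangle (u := p.getVert i) (v := p.getVert n) (w := p.getVert (n+1))
      omega

lemma dist_getVert_eq {V : Type*} {G : SimpleGraph V} (hG : G.Connected) {u v : V}
    (p : G.Walk u v) (hp : p.length = G.dist u v) (i j : ℕ) (hij : i ≤ j) (hj : j ≤ p.length) :
    G.dist (p.getVert i) (p.getVert j) = j - i := by
  have hub := dist_getVert_le hG p i j hij hj
  have h0i := dist_getVert_le hG p 0 i (Nat.zero_le _) (le_trans hij hj)
  have hjl := dist_getVert_le hG p j p.length hj le_rfl
  rw [p.getVert_zero] at h0i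
  rw [p.getVert_length] at hjl
  have t1 := hG.dist_triangle (u := u) (v := p.getVert i) (w := p.getVert j)
  have t2 := hG.dist_triangle (u := u) (v := p.getVert j) (w := v)
  omega

theorem stmt_14 {V : Type*} [Fintype V] (G : SimpleGraph V) (hG : G.Connected)
    (hn : 7 ≤ Fintype.card V) (hd : 4 ≤ G.diam) :
    etaP G ≤ Fintype.card V - 3 := by
  classical
  have hNE : Nonempty V := Fintype.card_pos_iff.mp (by omega)
  obtain ⟨u, v, huv⟩ := G.exists_dist_eq_diam
  have h4 : 4 ≤ G.dist u v := by rw [huv]; exact hd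
  obtain ⟨p, hp⟩ := hG.exists_walk_length_eq_dist u v
  have hL : 4 ≤ p.length := by omega
  obtain ⟨x0, hx0⟩ : ∃ w, w = p.getVert 0 := ⟨_, rfl⟩
  obtain ⟨x1, hx1⟩ : ∃ w, w = p.getVert 1 := ⟨_, rfl⟩
  obtain ⟨x2, hx2⟩ : ∃ w, w = p.getVert 2 := ⟨_, rfl⟩
  obtain ⟨x3, hx3⟩ : ∃ w, w = p.getVert 3 := ⟨_, rfl⟩
  obtain ⟨x4, hx4⟩ : ∃ w, w = p.getVert 4 := ⟨_, rfl⟩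
  have D : ∀ i j : ℕ, i ≤ j → j ≤ 4 → G.dist (p.getVert i) (p.getVert j) = j - i :=
    fun i j hij hj => dist_getVert_eq hG p hp i j hij (by omega)
  have hneOf : ∀ (a b : V) (k : ℕ), G.dist a b = k → 1 ≤ k → a ≠ b := by
    intro a b k hdk hk hab
    rw [hab, SimpleGraph.dist_self] at hdk
    omega
  have d01 : G.dist x0 x1 = 1 := by
    rw [hx0, hx1]; simpa using D 0 1 (by omega) (by omega)
  have r10 : G.dist x1 x0 = 1 := by rw [SimpleGraph.dist_comm]; exact d01
  have d02 : G.dist x0 x2 = 2 := by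
    rw [hx0, hx2]; simpa using D 0 2 (by omega) (by omega)
  have r20 : G.dist x2 x0 = 2 := by rw [SimpleGraph.dist_comm]; exact d02
  have d03 : G.dist x0 x3 = 3 := by
    rw [hx0, hx3]; simpa using D 0 3 (by omega) (by omega)
  have r30 : G.dist x3 x0 = 3 := by rw [SimpleGraph.dist_comm]; exact d03
  have d04 : G.dist x0 x4 = 4 := by
    rw [hx0, hx4]; simpa using D 0 4 (by omega) (by omega)
  have r40 : G.dist x4 x0 = 4 := by rw [SimpleGraph.dist_comm]; exact d04
  have d12 : G.dist x1 x2 = 1 := by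
    rw [hx1, hx2]; simpa using D 1 2 (by omega) (by omega)
  have r21 : G.dist x2 x1 = 1 := by rw [SimpleGraph.dist_comm]; exact d12
  have d13 : G.dist x1 x3 = 2 := by
    rw [hx1, hx3]; simpa using D 1 3 (by omega) (by omega)
  have r31 : G.dist x3 x1 = 2 := by rw [SimpleGraph.dist_comm]; exact d13
  have d14 : G.dist x1 x4 = 3 := by
    rw [hx1, hx4]; simpa using D 1 4 (by omega) (by omega)
  have r41 : G.dist x4 x1 = 3 := by rw [SimpleGraph.dist_comm]; exact d14
  have d23 : G.dist x2 x3 = 1 := by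
    rw [hx2, hx3]; simpa using D 2 3 (by omega) (by omega)
  have r32 : G.dist x3 x2 = 1 := by rw [SimpleGraph.dist_comm]; exact d23
  have d24 : G.dist x2 x4 = 2 := by
    rw [hx2, hx4]; simpa using D 2 4 (by omega) (by omega)
  have r42 : G.dist x4 x2 = 2 := by rw [SimpleGraph.dist_comm]; exact d24
  have d34 : G.dist x3 x4 = 1 := by
    rw [hx3, hx4]; simpa using D 3 4 (by omega) (by omega)
  have r43 : G.dist x4 x3 = 1 := by rw [SimpleGraph.dist_comm]; exact d34
  have hn01 : x0 ≠ x1 := hneOf _ _ _ d01 (by norm_num)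
  have hn10 : x1 ≠ x0 := hn01.symm
  have hn02 : x0 ≠ x2 := hneOf _ _ _ d02 (by norm_num)
  have hn20 : x2 ≠ x0 := hn02.symm
  have hn03 : x0 ≠ x3 := hneOf _ _ _ d03 (by norm_num)
  have hn30 : x3 ≠ x0 := hn03.symm
  have hn04 : x0 ≠ x4 := hneOf _ _ _ d04 (by norm_num)
  have hn40 : x4 ≠ x0 := hn04.symm
  have hn12 : x1 ≠ x2 := hneOf _ _ _ d12 (by norm_num)
  have hn21 : x2 ≠ x1 := hn12.symm
  have hn13 : x1 ≠ x3 := hneOf _ _ _ d13 (by norm_num)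
  have hn31 : x3 ≠ x1 := hn13.symm
  have hn14 : x1 ≠ x4 := hneOf _ _ _ d14 (by norm_num)
  have hn41 : x4 ≠ x1 := hn14.symm
  have hn23 : x2 ≠ x3 := hneOf _ _ _ d23 (by norm_num)
  have hn32 : x3 ≠ x2 := hn23.symm
  have hn24 : x2 ≠ x4 := hneOf _ _ _ d24 (by norm_num)
  have hn42 : x4 ≠ x2 := hn24.symm
  have hn34 : x3 ≠ x4 := hneOf _ _ _ d34 (by norm_num)
  have hn43 : x4 ≠ x3 := hn34.symm
  have a01 : G.Adj x0 x1 := by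
    rw [hx0, hx1]
    simpa using p.adj_getVert_succ (show 0 < p.length by omega)
  have a12 : G.Adj x1 x2 := by
    rw [hx1, hx2]
    simpa using p.adj_getVert_succ (show 1 < p.length by omega)
  have a23 : G.Adj x2 x3 := by
    rw [hx2, hx3]
    simpa using p.adj_getVert_succ (show 2 < p.length by omega)
  have a34 : G.Adj x3 x4 := by
    rw [hx3, hx4]
    simpa using p.adj_getVert_succ (show 3 < p.length by omega)
  clear hx0 hx1 hx2 hx3 hx4 hp D huv hL h4 hneOf
  obtain ⟨y, hy⟩ : ∃ y, y ∉ ({x0, x1, x2, x3, x4} : Set V) := by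
    by_contra hcon
    push_neg at hcon
    have hsub : (Set.univ : Set V) ⊆ {x0, x1, x2, x3, x4} := fun w _ => hcon w
    have h1 := Set.ncard_le_ncard hsub (Set.toFinite _)
    have h2 := Set.ncard_insert_le x0 ({x1, x2, x3, x4} : Set V)
    have h3 := Set.ncard_insert_le x1 ({x2, x3, x4} : Set V)
    have h4 := Set.ncard_insert_le x2 ({x3, x4} : Set V)
    have h5 := Set.ncard_insert_le x3 ({x4} : Set V)
    have h6 : ({x4} : Set V).ncard = 1 := Set.ncard_singleton x4
    have h7 : (Set.univ : Set V).ncard = Fintype.card V := by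
      rw [Set.ncard_univ, Nat.card_eq_fintype_card]
    omega
  simp only [Set.mem_insert_iff, Set.mem_singleton_iff, not_or] at hy
  obtain ⟨hyx0, hyx1, hyx2, hyx3, hyx4⟩ := hy
  have hxy0 : x0 ≠ y := Ne.symm hyx0
  have hxy1 : x1 ≠ y := Ne.symm hyx1
  have hxy2 : x2 ≠ y := Ne.symm hyx2
  have hxy3 : x3 ≠ y := Ne.symm hyx3
  have hxy4 : x4 ≠ y := Ne.symm hyx4
  have hge : ∀ w : V, y ≠ w → ¬ G.Adj y w → 2 ≤ G.dist y w := by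
    intro w hnw hnadj
    have h0 : G.dist y w ≠ 0 := (hG.pos_dist_of_ne hnw).ne'
    have h1 : G.dist y w ≠ 1 := fun h => hnadj (SimpleGraph.dist_eq_one_iff_adj.mp h)
    omega
  by_cases hadj4 : G.Adj y x4
  · refine master G hG hn x1 x2 x3 x4 x0 y hn12 hn13 hn14 hn10 hxy1 hn23 hn24 hn20 hxy2 hn34 hn30 hxy3 hn40 hxy4 hxy0 ?_ ?_ ?_ ?_
    · exact ⟨{x3,x4}, Or.inr (Or.inl rfl), by
        rw [pDist_pair, pDist_pair, d13, d14, d23, d24]; decide⟩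
    · exact ⟨{x1,x2}, Or.inl rfl, by
        rw [pDist_pair, pDist_pair, r31, r32, r41, r42]; decide⟩
    · refine ⟨{x3,x4}, Or.inr (Or.inl rfl), ?_⟩
      have h1 : pDist G x0 {x3,x4} = 3 := by rw [pDist_pair, d03, d04]; decide
      have h2 : pDist G y {x3,x4} ≤ 1 :=
        le_trans (pDist_le (Or.inr rfl)) (le_of_eq (SimpleGraph.dist_eq_one_iff_adj.mpr hadj4))
      omega
    · intro w hw
      simp only [Set.mem_insert_iff, Set.mem_singleton_iff] at hw
      rcases hw with h | h | h | h | h | h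
      · rw [h]; exact ⟨x0, a01.symm, tri_helper ({x1,x2} : Set V) ({x3,x4} : Set V) ({x0,y} : Set V) x1 x0 (fun _ => (by simp only [Set.mem_insert_iff, Set.mem_singleton_iff, not_or]; exact ⟨hn01, hn02⟩)) (fun hmem => absurd hmem (by simp only [Set.mem_insert_iff, Set.mem_singleton_iff, not_or]; exact ⟨hn13, hn14⟩)) (fun hmem => absurd hmem (by simp only [Set.mem_insert_iff, Set.mem_singleton_iff, not_or]; exact ⟨hn10, hxy1⟩))⟩
      · rw [h]; exact ⟨x3, a23, tri_helper ({x1,x2} : Set V) ({x3,x4} : Set V) ({x0,y} : Set V) x2 x3 (fun _ => (by simp only [Set.mem_insert_iff, Set.mem_singleton_iff, not_or]; exact ⟨hn31, hn32⟩)) (fun hmem => absurd hmem (by simp only [Set.mem_insert_iff, Set.mem_singleton_iff, not_or]; exact ⟨hn23, hn24⟩)) (fun hmem => absurd hmem (by simp only [Set.mem_insert_iff, Set.mem_singleton_iff, not_or]; exact ⟨hn20, hxy2⟩))⟩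
      · rw [h]; exact ⟨x2, a23.symm, tri_helper ({x1,x2} : Set V) ({x3,x4} : Set V) ({x0,y} : Set V) x3 x2 (fun hmem => absurd hmem (by simp only [Set.mem_insert_iff, Set.mem_singleton_iff, not_or]; exact ⟨hn31, hn32⟩)) (fun _ => (by simp only [Set.mem_insert_iff, Set.mem_singleton_iff, not_or]; exact ⟨hn23, hn24⟩)) (fun hmem => absurd hmem (by simp only [Set.mem_insert_iff, Set.mem_singleton_iff, not_or]; exact ⟨hn30, hxy3⟩))⟩
      · rw [h]; exact ⟨y, hadj4.symm, tri_helper ({x1,x2} : Set V) ({x3,x4} : Set V) ({x0,y} : Set V) x4 y (fun hmem => absurd hmem (by simp only [Set.mem_insert_iff, Set.mem_singleton_iff, not_or]; exact ⟨hn41, hn42⟩)) (fun _ => (by simp only [Set.mem_insert_iff, Set.mem_singleton_iff, not_or]; exact ⟨hyx3, hyx4⟩)) (fun hmem => absurd hmem (by simp only [Set.mem_insert_iff, Set.mem_singleton_iff, not_or]; exact ⟨hn40, hxy4⟩))⟩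
      · rw [h]; exact ⟨x1, a01, tri_helper ({x1,x2} : Set V) ({x3,x4} : Set V) ({x0,y} : Set V) x0 x1 (fun hmem => absurd hmem (by simp only [Set.mem_insert_iff, Set.mem_singleton_iff, not_or]; exact ⟨hn01, hn02⟩)) (fun hmem => absurd hmem (by simp only [Set.mem_insert_iff, Set.mem_singleton_iff, not_or]; exact ⟨hn03, hn04⟩)) (fun _ => (by simp only [Set.mem_insert_iff, Set.mem_singleton_iff, not_or]; exact ⟨hn10, hxy1⟩))⟩
      · rw [h]; exact ⟨x4, hadj4, tri_helper ({x1,x2} : Set V) ({x3,x4} : Set V) ({x0,y} : Set V) y x4 (fun hmem => absurd hmem (by simp only [Set.mem_insert_iff, Set.mem_singleton_iff, not_or]; exact ⟨hyx1, hyx2⟩)) (fun hmem => absurd hmem (by simp only [Set.mem_insert_iff, Set.mem_singleton_iff, not_or]; exact ⟨hyx3, hyx4⟩)) (fun _ => (by simp only [Set.mem_insert_iff, Set.mem_singleton_iff, not_or]; exact ⟨hn40, hxy4⟩))⟩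
  by_cases hadj0 : G.Adj y x0
  · have by4 : 2 ≤ G.dist y x4 := hge x4 hyx4 hadj4
    refine master G hG hn x2 x3 x0 x1 x4 y hn23 hn20 hn21 hn24 hxy2 hn30 hn31 hn34 hxy3 hn01 hn04 hxy0 hn14 hxy1 hxy4 ?_ ?_ ?_ ?_
    · exact ⟨{x0,x1}, Or.inr (Or.inl rfl), by
        rw [pDist_pair, pDist_pair, r20, r21, r30, r31]; decide⟩
    · exact ⟨{x2,x3}, Or.inl rfl, by
        rw [pDist_pair, pDist_pair, d02, d03, d12, d13]; decide⟩
    · refine ⟨{x0,x1}, Or.inr (Or.inl rfl), ?_⟩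
      have h1 : pDist G x4 {x0,x1} = 3 := by rw [pDist_pair, r40, r41]; decide
      have h2 : pDist G y {x0,x1} ≤ 1 :=
        le_trans (pDist_le (Or.inl rfl)) (le_of_eq (SimpleGraph.dist_eq_one_iff_adj.mpr hadj0))
      omega
    · intro w hw
      simp only [Set.mem_insert_iff, Set.mem_singleton_iff] at hw
      rcases hw with h | h | h | h | h | h
      · rw [h]; exact ⟨x1, a12.symm, tri_helper ({x2,x3} : Set V) ({x0,x1} : Set V) ({x4,y} : Set V) x2 x1 (fun _ => (by simp only [Set.mem_insert_iff, Set.mem_singleton_iff, not_or]; exact ⟨hn12, hn13⟩)) (fun hmem => absurd hmem (by simp only [Set.mem_insert_iff, Set.mem_singleton_iff, not_or]; exact ⟨hn20, hn21⟩)) (fun hmem => absurd hmem (by simp only [Set.mem_insert_iff, Set.mem_singleton_iff, not_or]; exact ⟨hn24, hxy2⟩))⟩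
      · rw [h]; exact ⟨x4, a34, tri_helper ({x2,x3} : Set V) ({x0,x1} : Set V) ({x4,y} : Set V) x3 x4 (fun _ => (by simp only [Set.mem_insert_iff, Set.mem_singleton_iff, not_or]; exact ⟨hn42, hn43⟩)) (fun hmem => absurd hmem (by simp only [Set.mem_insert_iff, Set.mem_singleton_iff, not_or]; exact ⟨hn30, hn31⟩)) (fun hmem => absurd hmem (by simp only [Set.mem_insert_iff, Set.mem_singleton_iff, not_or]; exact ⟨hn34, hxy3⟩))⟩
      · rw [h]; exact ⟨y, hadj0.symm, tri_helper ({x2,x3} : Set V) ({x0,x1} : Set V) ({x4,y} : Set V) x0 y (fun hmem => absurd hmem (by simp only [Set.mem_insert_iff, Set.mem_singleton_iff, not_or]; exact ⟨hn02, hn03⟩)) (fun _ => (by simp only [Set.mem_insert_iff, Set.mem_singleton_iff, not_or]; exact ⟨hyx0, hyx1⟩)) (fun hmem => absurd hmem (by simp only [Set.mem_insert_iff, Set.mem_singleton_iff, not_or]; exact ⟨hn04, hxy0⟩))⟩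
      · rw [h]; exact ⟨x2, a12, tri_helper ({x2,x3} : Set V) ({x0,x1} : Set V) ({x4,y} : Set V) x1 x2 (fun hmem => absurd hmem (by simp only [Set.mem_insert_iff, Set.mem_singleton_iff, not_or]; exact ⟨hn12, hn13⟩)) (fun _ => (by simp only [Set.mem_insert_iff, Set.mem_singleton_iff, not_or]; exact ⟨hn20, hn21⟩)) (fun hmem => absurd hmem (by simp only [Set.mem_insert_iff, Set.mem_singleton_iff, not_or]; exact ⟨hn14, hxy1⟩))⟩
      · rw [h]; exact ⟨x3, a34.symm, tri_helper ({x2,x3} : Set V) ({x0,x1} : Set V) ({x4,y} : Set V) x4 x3 (fun hmem => absurd hmem (by simp only [Set.mem_insert_iff, Set.mem_singleton_iff, not_or]; exact ⟨hn42, hn43⟩)) (fun hmem => absurd hmem (by simp only [Set.mem_insert_iff, Set.mem_singleton_iff, not_or]; exact ⟨hn40, hn41⟩)) (fun _ => (by simp only [Set.mem_insert_iff, Set.mem_singleton_iff, not_or]; exact ⟨hn34, hxy3⟩))⟩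
      · rw [h]; exact ⟨x0, hadj0, tri_helper ({x2,x3} : Set V) ({x0,x1} : Set V) ({x4,y} : Set V) y x0 (fun hmem => absurd hmem (by simp only [Set.mem_insert_iff, Set.mem_singleton_iff, not_or]; exact ⟨hyx2, hyx3⟩)) (fun hmem => absurd hmem (by simp only [Set.mem_insert_iff, Set.mem_singleton_iff, not_or]; exact ⟨hyx0, hyx1⟩)) (fun _ => (by simp only [Set.mem_insert_iff, Set.mem_singleton_iff, not_or]; exact ⟨hn04, hxy0⟩))⟩
  have by0 : 2 ≤ G.dist y x0 := hge x0 hyx0 hadj0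
  have by4 : 2 ≤ G.dist y x4 := hge x4 hyx4 hadj4
  by_cases hexz : ∃ z, G.Adj y z ∧ z ≠ x1
  · obtain ⟨z, hz⟩ := hexz
    have hzy : z ≠ y := hz.1.ne'
    refine master G hG hn x0 x4 x2 x3 x1 y hn04 hn02 hn03 hn01 hxy0 hn42 hn43 hn41 hxy4 hn23 hn21 hxy2 hn31 hxy3 hxy1 ?_ ?_ ?_ ?_
    · exact ⟨{x2,x3}, Or.inr (Or.inl rfl), by
        rw [pDist_pair, pDist_pair, d02, d03, r42, r43]; decide⟩
    · exact ⟨{x0,x4}, Or.inl rfl, by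
        rw [pDist_pair, pDist_pair, r20, d24, r30, d34]; decide⟩
    · refine ⟨{x0,x4}, Or.inl rfl, ?_⟩
      have h1 : pDist G x1 {x0,x4} = 1 := by rw [pDist_pair, r10, d14]; decide
      have h2 : 2 ≤ pDist G y {x0,x4} := by
        rw [pDist_pair]; exact le_min by0 by4
      omega
    · intro w hw
      simp only [Set.mem_insert_iff, Set.mem_singleton_iff] at hw
      rcases hw with h | h | h | h | h | h
      · rw [h]; exact ⟨x1, a01, tri_helper ({x0,x4} : Set V) ({x2,x3} : Set V) ({x1,y} : Set V) x0 x1 (fun _ => (by simp only [Set.mem_insert_iff, Set.mem_singleton_iff, not_or]; exact ⟨hn10, hn14⟩)) (fun hmem => absurd hmem (by simp only [Set.mem_insert_iff, Set.mem_singleton_iff, not_or]; exact ⟨hn02, hn03⟩)) (fun hmem => absurd hmem (by simp only [Set.mem_insert_iff, Set.mem_singleton_iff, not_or]; exact ⟨hn01, hxy0⟩))⟩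
      · rw [h]; exact ⟨x3, a34.symm, tri_helper ({x0,x4} : Set V) ({x2,x3} : Set V) ({x1,y} : Set V) x4 x3 (fun _ => (by simp only [Set.mem_insert_iff, Set.mem_singleton_iff, not_or]; exact ⟨hn30, hn34⟩)) (fun hmem => absurd hmem (by simp only [Set.mem_insert_iff, Set.mem_singleton_iff, not_or]; exact ⟨hn42, hn43⟩)) (fun hmem => absurd hmem (by simp only [Set.mem_insert_iff, Set.mem_singleton_iff, not_or]; exact ⟨hn41, hxy4⟩))⟩
      · rw [h]; exact ⟨x1, a12.symm, tri_helper ({x0,x4} : Set V) ({x2,x3} : Set V) ({x1,y} : Set V) x2 x1 (fun hmem => absurd hmem (by simp only [Set.mem_insert_iff, Set.mem_singleton_iff, not_or]; exact ⟨hn20, hn24⟩)) (fun _ => (by simp only [Set.mem_insert_iff, Set.mem_singleton_iff, not_or]; exact ⟨hn12, hn13⟩)) (fun hmem => absurd hmem (by simp only [Set.mem_insert_iff, Set.mem_singleton_iff, not_or]; exact ⟨hn21, hxy2⟩))⟩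
      · rw [h]; exact ⟨x4, a34, tri_helper ({x0,x4} : Set V) ({x2,x3} : Set V) ({x1,y} : Set V) x3 x4 (fun hmem => absurd hmem (by simp only [Set.mem_insert_iff, Set.mem_singleton_iff, not_or]; exact ⟨hn30, hn34⟩)) (fun _ => (by simp only [Set.mem_insert_iff, Set.mem_singleton_iff, not_or]; exact ⟨hn42, hn43⟩)) (fun hmem => absurd hmem (by simp only [Set.mem_insert_iff, Set.mem_singleton_iff, not_or]; exact ⟨hn31, hxy3⟩))⟩
      · rw [h]; exact ⟨x0, a01.symm, tri_helper ({x0,x4} : Set V) ({x2,x3} : Set V) ({x1,y} : Set V) x1 x0 (fun hmem => absurd hmem (by simp only [Set.mem_insert_iff, Set.mem_singleton_iff, not_or]; exact ⟨hn10, hn14⟩)) (fun hmem => absurd hmem (by simp only [Set.mem_insert_iff, Set.mem_singleton_iff, not_or]; exact ⟨hn12, hn13⟩)) (fun _ => (by simp only [Set.mem_insert_iff, Set.mem_singleton_iff, not_or]; exact ⟨hn01, hxy0⟩))⟩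
      · rw [h]; exact ⟨z, hz.1, tri_helper ({x0,x4} : Set V) ({x2,x3} : Set V) ({x1,y} : Set V) y z (fun hmem => absurd hmem (by simp only [Set.mem_insert_iff, Set.mem_singleton_iff, not_or]; exact ⟨hyx0, hyx4⟩)) (fun hmem => absurd hmem (by simp only [Set.mem_insert_iff, Set.mem_singleton_iff, not_or]; exact ⟨hyx2, hyx3⟩)) (fun _ => (by simp only [Set.mem_insert_iff, Set.mem_singleton_iff, not_or]; exact ⟨hz.2, hzy⟩))⟩
  · push_neg at hexz
    obtain ⟨z0, hz0⟩ := exists_adj hG (by omega) y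
    have hadj1 : G.Adj y x1 := by
      have hzx := hexz z0 hz0
      rw [← hzx]; exact hz0
    have hnadj3 : ¬ G.Adj y x3 := fun h => hn13 (hexz x3 h).symm
    have by3 : 2 ≤ G.dist y x3 := hge x3 hyx3 hnadj3
    have c0 : 2 ≤ G.dist x0 y := by rw [SimpleGraph.dist_comm]; exact by0
    have c4 : 2 ≤ G.dist x4 y := by rw [SimpleGraph.dist_comm]; exact by4
    refine master G hG hn x0 x3 x1 x4 x2 y hn03 hn01 hn04 hn02 hxy0 hn31 hn34 hn32 hxy3 hn14 hn12 hxy1 hn42 hxy4 hxy2 ?_ ?_ ?_ ?_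
    · refine ⟨{x2,y}, Or.inr (Or.inr rfl), ?_⟩
      have h1 : pDist G x0 {x2,y} = 2 := by
        rw [pDist_pair, d02]; exact min_eq_left c0
      have h2 : pDist G x3 {x2,y} = 1 := by
        rw [pDist_pair, r32]
        exact min_eq_left (Nat.one_le_iff_ne_zero.mpr (hG.pos_dist_of_ne hxy3).ne')
      omega
    · refine ⟨{x2,y}, Or.inr (Or.inr rfl), ?_⟩
      have h1 : pDist G x1 {x2,y} ≤ 1 := le_trans (pDist_le (Or.inl rfl)) (le_of_eq d12)
      have h2 : pDist G x4 {x2,y} = 2 := by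
        rw [pDist_pair, r42]; exact min_eq_left c4
      omega
    · refine ⟨{x0,x3}, Or.inl rfl, ?_⟩
      have h1 : pDist G x2 {x0,x3} = 1 := by rw [pDist_pair, r20, d23]; decide
      have h2 : 2 ≤ pDist G y {x0,x3} := by
        rw [pDist_pair]; exact le_min by0 by3
      omega
    · intro w hw
      simp only [Set.mem_insert_iff, Set.mem_singleton_iff] at hw
      rcases hw with h | h | h | h | h | h
      · rw [h]; exact ⟨x1, a01, tri_helper ({x0,x3} : Set V) ({x1,x4} : Set V) ({x2,y} : Set V) x0 x1 (fun _ => (by simp only [Set.mem_insert_iff, Set.mem_singleton_iff, not_or]; exact ⟨hn10, hn13⟩)) (fun hmem => absurd hmem (by simp only [Set.mem_insert_iff, Set.mem_singleton_iff, not_or]; exact ⟨hn01, hn04⟩)) (fun hmem => absurd hmem (by simp only [Set.mem_insert_iff, Set.mem_singleton_iff, not_or]; exact ⟨hn02, hxy0⟩))⟩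
      · rw [h]; exact ⟨x2, a23.symm, tri_helper ({x0,x3} : Set V) ({x1,x4} : Set V) ({x2,y} : Set V) x3 x2 (fun _ => (by simp only [Set.mem_insert_iff, Set.mem_singleton_iff, not_or]; exact ⟨hn20, hn23⟩)) (fun hmem => absurd hmem (by simp only [Set.mem_insert_iff, Set.mem_singleton_iff, not_or]; exact ⟨hn31, hn34⟩)) (fun hmem => absurd hmem (by simp only [Set.mem_insert_iff, Set.mem_singleton_iff, not_or]; exact ⟨hn32, hxy3⟩))⟩
      · rw [h]; exact ⟨x0, a01.symm, tri_helper ({x0,x3} : Set V) ({x1,x4} : Set V) ({x2,y} : Set V) x1 x0 (fun hmem => absurd hmem (by simp only [Set.mem_insert_iff, Set.mem_singleton_iff, not_or]; exact ⟨hn10, hn13⟩)) (fun _ => (by simp only [Set.mem_insert_iff, Set.mem_singleton_iff, not_or]; exact ⟨hn01, hn04⟩)) (fun hmem => absurd hmem (by simp only [Set.mem_insert_iff, Set.mem_singleton_iff, not_or]; exact ⟨hn12, hxy1⟩))⟩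
      · rw [h]; exact ⟨x3, a34.symm, tri_helper ({x0,x3} : Set V) ({x1,x4} : Set V) ({x2,y} : Set V) x4 x3 (fun hmem => absurd hmem (by simp only [Set.mem_insert_iff, Set.mem_singleton_iff, not_or]; exact ⟨hn40, hn43⟩)) (fun _ => (by simp only [Set.mem_insert_iff, Set.mem_singleton_iff, not_or]; exact ⟨hn31, hn34⟩)) (fun hmem => absurd hmem (by simp only [Set.mem_insert_iff, Set.mem_singleton_iff, not_or]; exact ⟨hn42, hxy4⟩))⟩
      · rw [h]; exact ⟨x1, a12.symm, tri_helper ({x0,x3} : Set V) ({x1,x4} : Set V) ({x2,y} : Set V) x2 x1 (fun hmem => absurd hmem (by simp only [Set.mem_insert_iff, Set.mem_singleton_iff, not_or]; exact ⟨hn20, hn23⟩)) (fun hmem => absurd hmem (by simp only [Set.mem_insert_iff, Set.mem_singleton_iff, not_or]; exact ⟨hn21, hn24⟩)) (fun _ => (by simp only [Set.mem_insert_iff, Set.mem_singleton_iff, not_or]; exact ⟨hn12, hxy1⟩))⟩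
      · rw [h]; exact ⟨x1, hadj1, tri_helper ({x0,x3} : Set V) ({x1,x4} : Set V) ({x2,y} : Set V) y x1 (fun hmem => absurd hmem (by simp only [Set.mem_insert_iff, Set.mem_singleton_iff, not_or]; exact ⟨hyx0, hyx3⟩)) (fun hmem => absurd hmem (by simp only [Set.mem_insert_iff, Set.mem_singleton_iff, not_or]; exact ⟨hyx1, hyx4⟩)) (fun _ => (by simp only [Set.mem_insert_iff, Set.mem_singleton_iff, not_or]; exact ⟨hn12, hxy1⟩))⟩
end

section
/- For a connected graph G of order n ≥ 6: η_p(G) = n if and only if G is isomorphic to the complete graph K_n or the star K_{1,n−1}. -/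
open SimpleGraph Set

section Aux
variable {V : Type*} {G : SimpleGraph V}

lemma pDist_singleton (G : SimpleGraph V) (v w : V) : pDist G v {w} = G.dist v w := by
  simp [pDist]

lemma pDist_eq_zero_of_mem {v : V} {S : Set V} (h : v ∈ S) : pDist G v S = 0 :=
  Nat.sInf_eq_zero.mpr (Or.inl ⟨v, h, SimpleGraph.dist_self⟩)

lemma pDist_eq_one_s16 {v : V} {S : Set V}
    (h1 : ∃ w ∈ S, G.dist v w = 1) (h2 : ∀ w ∈ S, G.dist v w ≠ 0) :
    pDist G v S = 1 := by
  obtain ⟨w, hw, hd⟩ := h1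
  refine le_antisymm (Nat.sInf_le ⟨w, hw, hd⟩) ?_
  obtain ⟨x, hx, he⟩ := Nat.sInf_mem (s := G.dist v '' S) ⟨1, ⟨w, hw, hd⟩⟩
  rw [pDist, ← he]
  exact Nat.one_le_iff_ne_zero.mpr (h2 x hx)

lemma pDist_eq_of_const {v : V} {S : Set V} {k : ℕ} (hne : S.Nonempty)
    (h : ∀ w ∈ S, G.dist v w = k) : pDist G v S = k := by
  obtain ⟨w, hw⟩ := hne
  refine le_antisymm (Nat.sInf_le ⟨w, hw, h w hw⟩) ?_
  obtain ⟨x, hx, he⟩ := Nat.sInf_mem (s := G.dist v '' S) ⟨k, ⟨w, hw, h w hw⟩⟩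
  rw [pDist, ← he, h x hx]

lemma one_mem_of_pDist_eq_one {v : V} {S : Set V} (h : pDist G v S = 1) :
    ∃ w ∈ S, G.dist v w = 1 := by
  have hne : (G.dist v '' S).Nonempty := by
    by_contra hc
    rw [Set.not_nonempty_iff_eq_empty] at hc
    rw [pDist, hc, Nat.sInf_empty] at h
    exact one_ne_zero h.symm
  have := Nat.sInf_mem hne
  rw [← pDist, h] at this
  obtain ⟨w, hw, he⟩ := this
  exact ⟨w, hw, he⟩

lemma exists_adj_s16 (hG : G.Connected) (v : V) (h2 : ∃ u : V, u ≠ v) : ∃ w, G.Adj v w := by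
  obtain ⟨u, hu⟩ := h2
  obtain ⟨p⟩ := hG v u
  cases p with
  | nil => exact absurd rfl hu.symm
  | cons h _ => exact ⟨_, h⟩

lemma singleton_fam (hG : G.Connected) [Fintype V] (h2 : 2 ≤ Fintype.card V) :
    Setoid.IsPartition (Set.range fun v : V => ({v} : Set V)) ∧
    IsResolvingFam G (Set.range fun v : V => ({v} : Set V)) ∧
    IsDominatingFam G (Set.range fun v : V => ({v} : Set V)) ∧
    (Set.range fun v : V => ({v} : Set V)).ncard = Fintype.card V := by
  refine ⟨⟨?_, ?_⟩, ?_, ?_, ?_⟩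
  · rintro ⟨v, hv⟩
    exact (Set.singleton_ne_empty v) hv
  · intro v
    refine ⟨{v}, ⟨⟨v, rfl⟩, rfl⟩, ?_⟩
    rintro S ⟨⟨w, rfl⟩, hvS⟩
    simp_all
  · intro u v huv
    refine ⟨{u}, ⟨u, rfl⟩, ?_⟩
    have h0 : pDist G u {u} = 0 := pDist_eq_zero_of_mem rfl
    rw [h0, pDist_singleton]
    exact (hG.pos_dist_of_ne (Ne.symm huv)).ne'.symm
  · intro v
    obtain ⟨w, hw⟩ := exists_adj_s16 hG v (by
      obtain ⟨u, x, hux⟩ := Fintype.exists_pair_of_one_lt_card h2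
      rcases eq_or_ne u v with rfl | h
      · exact ⟨x, Ne.symm hux⟩
      · exact ⟨u, h⟩)
    exact ⟨{w}, ⟨w, rfl⟩, by rw [pDist_singleton]; exact dist_eq_one_iff_adj.mpr hw⟩
  · rw [← Set.image_univ, Set.ncard_image_of_injective _ (fun a b h => by simpa using h),
      Set.ncard_univ, Nat.card_eq_fintype_card]

end Aux

section Aux2
variable {V : Type*} {G : SimpleGraph V}

lemma part_nonempty {P : Set (Set V)} (hP : Setoid.IsPartition P) {S : Set V} (hS : S ∈ P) :
    S.Nonempty :=
  Set.nonempty_iff_ne_empty.mpr (fun h => hP.1 (h ▸ hS))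

lemma part_unique {P : Set (Set V)} (hP : Setoid.IsPartition P) {S T : Set V} {u : V}
    (hS : S ∈ P) (hT : T ∈ P) (huS : u ∈ S) (huT : u ∈ T) : S = T := by
  obtain ⟨W, _, hW⟩ := hP.2 u
  rw [hW S ⟨hS, huS⟩, hW T ⟨hT, huT⟩]

lemma partition_all_singletons [Fintype V] {P : Set (Set V)} (hP : Setoid.IsPartition P)
    (h : ∀ S ∈ P, ∃ x, S = {x}) : P.ncard = Fintype.card V := by
  have hPr : P = Set.range fun v : V => ({v} : Set V) := by
    ext S
    constructor
    · intro hS; obtain ⟨x, rfl⟩ := h S hS; exact ⟨x, rfl⟩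
    · rintro ⟨v, rfl⟩
      obtain ⟨S, ⟨hS, hvS⟩, _⟩ := hP.2 v
      obtain ⟨x, rfl⟩ := h S hS
      rw [Set.mem_singleton_iff] at hvS
      subst hvS
      exact hS
  rw [hPr, ← Set.image_univ, Set.ncard_image_of_injective _ (fun a b h => by simpa using h),
    Set.ncard_univ, Nat.card_eq_fintype_card]

lemma complete_parts (hG : G.Connected) (hc : ∀ u v : V, u ≠ v → G.Adj u v)
    {P : Set (Set V)} (hP : Setoid.IsPartition P) (hR : IsResolvingFam G P) :
    ∀ S ∈ P, ∃ x, S = {x} := by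
  intro S hS
  obtain ⟨x, hx⟩ := part_nonempty hP hS
  refine ⟨x, Set.eq_singleton_iff_unique_mem.mpr ⟨hx, ?_⟩⟩
  intro y hy
  by_contra hyx
  obtain ⟨T, hT, hne⟩ := hR y x hyx
  apply hne
  by_cases hxT : x ∈ T
  · have := part_unique hP hS hT hx hxT
    subst this
    rw [pDist_eq_zero_of_mem hy, pDist_eq_zero_of_mem hx]
  · by_cases hyT : y ∈ T
    · have := part_unique hP hS hT hy hyT
      subst this
      rw [pDist_eq_zero_of_mem hy, pDist_eq_zero_of_mem hx]
    · have hTne := part_nonempty hP hT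
      rw [pDist_eq_of_const hTne (fun w hw => dist_eq_one_iff_adj.mpr
          (hc y w (fun h => hyT (by rw [h]; exact hw)))),
        pDist_eq_of_const hTne (fun w hw => dist_eq_one_iff_adj.mpr
          (hc x w (fun h => hxT (by rw [h]; exact hw))))]

end Aux2

section Aux3
variable {V : Type*} {G : SimpleGraph V}

lemma star_dist_one (hstar : ∀ u v : V, G.Adj u v ↔ (u = c ∧ v ≠ c) ∨ (v = c ∧ u ≠ c))
    {x : V} (hx : x ≠ c) : G.dist x c = 1 :=
  dist_eq_one_iff_adj.mpr ((hstar x c).mpr (Or.inr ⟨rfl, hx⟩))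

lemma star_dist_two (hG : G.Connected) {c : V}
    (hstar : ∀ u v : V, G.Adj u v ↔ (u = c ∧ v ≠ c) ∨ (v = c ∧ u ≠ c))
    {x y : V} (hxy : x ≠ y) (hx : x ≠ c) (hy : y ≠ c) : G.dist x y = 2 := by
  have hna : ¬ G.Adj x y := by
    intro h
    rcases (hstar x y).mp h with ⟨h1, _⟩ | ⟨h1, _⟩
    exacts [hx h1, hy h1]
  have hle : G.dist x y ≤ 2 := by
    simpa using SimpleGraph.dist_le
      (SimpleGraph.Walk.cons ((hstar x c).mpr (Or.inr ⟨rfl, hx⟩))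
        (SimpleGraph.Walk.cons ((hstar c y).mpr (Or.inl ⟨rfl, hy⟩)) SimpleGraph.Walk.nil))
  have h0 : G.dist x y ≠ 0 := (hG.pos_dist_of_ne hxy).ne'
  have h1 : G.dist x y ≠ 1 := fun h => hna (dist_eq_one_iff_adj.mp h)
  omega

lemma star_parts (hG : G.Connected) (c : V)
    (hstar : ∀ u v : V, G.Adj u v ↔ (u = c ∧ v ≠ c) ∨ (v = c ∧ u ≠ c))
    {P : Set (Set V)} (hP : Setoid.IsPartition P) (hR : IsResolvingFam G P)
    (hD : IsDominatingFam G P) : ∀ S ∈ P, ∃ x, S = {x} := by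
  -- step (i): the part containing c contains nothing else
  have hci : ∀ S ∈ P, c ∈ S → ∀ l ∈ S, l = c := by
    intro S hS hcS l hlS
    by_contra hlc
    obtain ⟨T, hT, hT1⟩ := hD l
    obtain ⟨w, hwT, hw1⟩ := one_mem_of_pDist_eq_one hT1
    have hadj : G.Adj l w := dist_eq_one_iff_adj.mp hw1
    have hwc : w = c := by
      rcases (hstar l w).mp hadj with ⟨h1, _⟩ | ⟨h1, _⟩
      exacts [absurd h1 hlc, h1]
    subst hwc
    have := part_unique hP hS hT hcS hwT
    subst this
    rw [pDist_eq_zero_of_mem hlS] at hT1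
    exact one_ne_zero hT1.symm
  -- step (ii): no part contains two distinct non-center vertices
  have hcii : ∀ S ∈ P, ∀ x ∈ S, ∀ y ∈ S, x ≠ c → y ≠ c → x = y := by
    intro S hS x hxS y hyS hxc hyc
    by_contra hxy
    obtain ⟨T, hT, hne⟩ := hR x y hxy
    apply hne
    by_cases hxT : x ∈ T
    · have := part_unique hP hS hT hxS hxT; subst this
      rw [pDist_eq_zero_of_mem hxS, pDist_eq_zero_of_mem hyS]
    · by_cases hyT : y ∈ T
      · have := part_unique hP hS hT hyS hyT; subst this
        rw [pDist_eq_zero_of_mem hxS, pDist_eq_zero_of_mem hyS]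
      · have hTne := part_nonempty hP hT
        by_cases hcT : c ∈ T
        · rw [pDist_eq_one_s16 ⟨c, hcT, star_dist_one hstar hxc⟩
            (fun w hw => (hG.pos_dist_of_ne (fun h => hxT (by rw [h]; exact hw))).ne'),
            pDist_eq_one_s16 ⟨c, hcT, star_dist_one hstar hyc⟩
            (fun w hw => (hG.pos_dist_of_ne (fun h => hyT (by rw [h]; exact hw))).ne')]
        · rw [pDist_eq_of_const hTne (fun w hw => star_dist_two hG hstar
              (fun h => hxT (by rw [h]; exact hw)) hxc (fun h => hcT (by rw [← h]; exact hw))),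
            pDist_eq_of_const hTne (fun w hw => star_dist_two hG hstar
              (fun h => hyT (by rw [h]; exact hw)) hyc (fun h => hcT (by rw [← h]; exact hw)))]
  intro S hS
  obtain ⟨x, hx⟩ := part_nonempty hP hS
  refine ⟨x, Set.eq_singleton_iff_unique_mem.mpr ⟨hx, ?_⟩⟩
  intro y hy
  by_cases hxc : x = c
  · subst hxc; exact hci S hS hx y hy
  · by_cases hyc : y = c
    · subst hyc; exact absurd (hci S hS hy x hx) hxc
    · exact (hcii S hS x hx y hy hxc hyc).symm

end Aux3

section Aux4
variable {V : Type*} {G : SimpleGraph V}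

lemma pair_partition [Fintype V] (hG : G.Connected)
    {u v w x y : V} (huv : u ≠ v) (hwu : w ≠ u) (hwv : w ≠ v)
    (hdw : G.dist u w ≠ G.dist v w) (hx : G.Adj u x) (hxv : x ≠ v)
    (hy : G.Adj v y) (hyu : y ≠ u) :
    ∃ P : Set (Set V), Setoid.IsPartition P ∧ IsResolvingFam G P ∧ IsDominatingFam G P ∧
      P.ncard = Fintype.card V - 1 := by
  classical
  refine ⟨insert {u, v} ((fun z => ({z} : Set V)) '' ({u, v}ᶜ)), ⟨?_, ?_⟩, ?_, ?_, ?_⟩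
  · rintro (h | ⟨z, hz, h⟩)
    · exact absurd (h ▸ (Set.mem_insert u {v})) (Set.notMem_empty u)
    · exact (Set.singleton_ne_empty z) h
  · intro z
    by_cases hz : z ∈ ({u, v} : Set V)
    · refine ⟨{u, v}, ⟨Set.mem_insert _ _, hz⟩, ?_⟩
      rintro S ⟨hS, hzS⟩
      rcases Set.mem_insert_iff.mp hS with rfl | ⟨t, ht, rfl⟩
      · rfl
      · rw [Set.mem_singleton_iff] at hzS
        exact absurd (hzS ▸ hz) ht
    · refine ⟨{z}, ⟨Set.mem_insert_iff.mpr (Or.inr ⟨z, hz, rfl⟩), rfl⟩, ?_⟩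
      rintro S ⟨hS, hzS⟩
      rcases Set.mem_insert_iff.mp hS with rfl | ⟨t, ht, rfl⟩
      · exact absurd hzS hz
      · rw [Set.mem_singleton_iff] at hzS
        rw [hzS]
  · intro p q hpq
    by_cases hp : p ∈ ({u, v} : Set V)
    · by_cases hq : q ∈ ({u, v} : Set V)
      · refine ⟨{w}, Set.mem_insert_iff.mpr (Or.inr ⟨w, by simp [hwu, hwv], rfl⟩), ?_⟩
        rw [pDist_singleton, pDist_singleton]
        rcases hp with rfl | rfl <;> rcases hq with rfl | rfl
        · exact absurd rfl hpq
        · exact hdw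
        · exact hdw.symm
        · exact absurd rfl hpq
      · refine ⟨{q}, Set.mem_insert_iff.mpr (Or.inr ⟨q, hq, rfl⟩), ?_⟩
        have h0 : pDist G q ({q} : Set V) = 0 := pDist_eq_zero_of_mem rfl
        rw [pDist_singleton, h0]
        exact (hG.pos_dist_of_ne hpq).ne'
    · refine ⟨{p}, Set.mem_insert_iff.mpr (Or.inr ⟨p, hp, rfl⟩), ?_⟩
      have h0 : pDist G p ({p} : Set V) = 0 := pDist_eq_zero_of_mem rfl
      rw [h0, pDist_singleton]
      exact ((hG.pos_dist_of_ne (Ne.symm hpq)).ne').symm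
  · intro z
    by_cases hz : z ∈ ({u, v} : Set V)
    · rcases hz with rfl | rfl
      · refine ⟨{x}, Set.mem_insert_iff.mpr (Or.inr ⟨x, by simp [hx.ne', hxv], rfl⟩), ?_⟩
        rw [pDist_singleton]
        exact dist_eq_one_iff_adj.mpr hx
      · refine ⟨{y}, Set.mem_insert_iff.mpr (Or.inr ⟨y, by simp [hy.ne', hyu], rfl⟩), ?_⟩
        rw [pDist_singleton]
        exact dist_eq_one_iff_adj.mpr hy
    · obtain ⟨t, ht⟩ := exists_adj_s16 hG z ⟨u, fun h => hz (by rw [← h]; exact Set.mem_insert u {v})⟩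
      by_cases htp : t ∈ ({u, v} : Set V)
      · refine ⟨{u, v}, Set.mem_insert _ _, ?_⟩
        refine pDist_eq_one_s16 ⟨t, htp, dist_eq_one_iff_adj.mpr ht⟩ ?_
        intro w' hw'
        exact (hG.pos_dist_of_ne (fun h => hz (by rw [h]; exact hw'))).ne'
      · refine ⟨{t}, Set.mem_insert_iff.mpr (Or.inr ⟨t, htp, rfl⟩), ?_⟩
        rw [pDist_singleton]
        exact dist_eq_one_iff_adj.mpr ht
  · have hnm : ({u, v} : Set V) ∉ (fun z => ({z} : Set V)) '' ({u, v}ᶜ) := by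
      rintro ⟨z, hz, h⟩
      have h' : ({z} : Set V) = {u, v} := h
      have hu : u ∈ ({z} : Set V) := by rw [h']; exact Set.mem_insert u {v}
      have hv : v ∈ ({z} : Set V) := by rw [h']; exact Set.mem_insert_iff.mpr (Or.inr rfl)
      rw [Set.mem_singleton_iff] at hu hv
      exact huv (hu.trans hv.symm)
    rw [Set.ncard_insert_of_notMem hnm (Set.toFinite _),
      Set.ncard_image_of_injective _ (fun a b h => by simpa using h)]
    have h1 : ({u, v} : Set V).ncard + ({u, v}ᶜ : Set V).ncard = Fintype.card V := by
      rw [Set.ncard_add_ncard_compl, Nat.card_eq_fintype_card]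
    have h2 : ({u, v} : Set V).ncard = 2 := Set.ncard_pair huv
    omega

end Aux4

section Aux5
variable {V : Type*} {G : SimpleGraph V}

lemma exists_good_pair [Fintype V] (hG : G.Connected)
    (hnc : ∃ a b : V, a ≠ b ∧ ¬ G.Adj a b)
    (hns : ∀ c : V, ¬ ∀ p q : V, G.Adj p q ↔ (p = c ∧ q ≠ c) ∨ (q = c ∧ p ≠ c)) :
    ∃ u v w x y : V, u ≠ v ∧ w ≠ u ∧ w ≠ v ∧ G.dist u w ≠ G.dist v w ∧
      G.Adj u x ∧ x ≠ v ∧ G.Adj v y ∧ y ≠ u := by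
  by_cases hA : ∃ p q : V, p ≠ q ∧ ¬ G.Adj p q ∧ ∃ w, w ≠ p ∧ w ≠ q ∧ G.dist p w ≠ G.dist q w
  · obtain ⟨p, q, hpq, hnadj, w, hwp, hwq, hd⟩ := hA
    obtain ⟨x, hx⟩ := exists_adj_s16 hG p ⟨q, hpq.symm⟩
    obtain ⟨y, hy⟩ := exists_adj_s16 hG q ⟨p, hpq⟩
    refine ⟨p, q, w, x, y, hpq, hwp, hwq, hd, hx, ?_, hy, ?_⟩
    · rintro rfl; exact hnadj hx
    · rintro rfl; exact hnadj (hy.symm)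
  · push_neg at hA
    obtain ⟨a, b, hab, hnadj⟩ := hnc
    obtain ⟨c, hc⟩ := exists_adj_s16 hG a ⟨b, hab.symm⟩
    have hca : c ≠ a := hc.ne'
    have hcb : c ≠ b := by rintro rfl; exact hnadj hc
    have htwin := hA a b hab hnadj
    have hbc : G.Adj b c := by
      have h1 : G.dist a c = G.dist b c := htwin c hca hcb
      rw [dist_eq_one_iff_adj.mpr hc] at h1
      exact dist_eq_one_iff_adj.mp h1.symm
    by_cases hdeg : ∃ x, G.Adj a x ∧ x ≠ c
    · obtain ⟨x, hax, hxc⟩ := hdeg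
      refine ⟨a, c, b, x, b, hca.symm, hab.symm, hcb.symm, ?_, hax, hxc, hbc.symm, hab.symm⟩
      rw [dist_eq_one_iff_adj.mpr hbc.symm]
      intro h1
      exact hnadj (dist_eq_one_iff_adj.mp h1)
    · push_neg at hdeg
      exfalso
      apply hns c
      have hfirst : ∀ x : V, x ≠ c → G.Adj x c := by
        intro x hxc
        rcases eq_or_ne x a with rfl | hxa
        · exact hc
        · have hnax : ¬ G.Adj a x := fun h => hxc (hdeg x h)
          have h1 := hA a x (Ne.symm hxa) hnax c hca (Ne.symm hxc)
          rw [dist_eq_one_iff_adj.mpr hc] at h1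
          exact dist_eq_one_iff_adj.mp h1.symm
      have hsecond : ∀ p q : V, p ≠ c → q ≠ c → ¬ G.Adj p q := by
        intro p q hpc hqc hadj
        have hpq : p ≠ q := hadj.ne
        rcases eq_or_ne p a with rfl | hpa
        · exact hqc (hdeg q hadj)
        · have hnap : ¬ G.Adj a p := fun h => hpc (hdeg p h)
          rcases eq_or_ne q a with rfl | hqa
          · exact hnap hadj.symm
          · have hnaq : ¬ G.Adj a q := fun h => hqc (hdeg q h)
            have h1 := hA a p (Ne.symm hpa) hnap q hqa hpq.symm
            rw [dist_eq_one_iff_adj.mpr hadj] at h1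
            exact hnaq (dist_eq_one_iff_adj.mp h1)
      intro p q
      constructor
      · intro h
        rcases eq_or_ne p c with rfl | hpc
        · exact Or.inl ⟨rfl, h.ne'⟩
        · rcases eq_or_ne q c with rfl | hqc
          · exact Or.inr ⟨rfl, hpc⟩
          · exact absurd h (hsecond p q hpc hqc)
      · rintro (⟨rfl, hq⟩ | ⟨rfl, hp⟩)
        · exact (hfirst q hq).symm
        · exact hfirst p hp
end Aux5

section Aux6
variable {V : Type*} {G : SimpleGraph V}

lemma etaP_eq_card [Fintype V] (hG : G.Connected) (h2 : 2 ≤ Fintype.card V)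
    (hparts : ∀ P : Set (Set V), Setoid.IsPartition P → IsResolvingFam G P → IsDominatingFam G P →
      ∀ S ∈ P, ∃ x, S = {x}) :
    etaP G = Fintype.card V := by
  obtain ⟨ha, hb, hc, hd⟩ := singleton_fam hG h2
  apply le_antisymm
  · exact Nat.sInf_le ⟨_, ha, hb, hc, hd⟩
  · refine le_csInf ⟨Fintype.card V, ⟨_, ha, hb, hc, hd⟩⟩ ?_
    rintro k ⟨P, hP1, hP2, hP3, hP4⟩
    rw [← hP4, partition_all_singletons hP1 (hparts P hP1 hP2 hP3)]

lemma complete_iso [Fintype V] (hc : ∀ u v : V, u ≠ v → G.Adj u v) :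
    Nonempty (G ≃g (⊤ : SimpleGraph (Fin (Fintype.card V)))) := by
  refine ⟨⟨Fintype.equivFin V, ?_⟩⟩
  intro a b
  simp only [top_adj, ne_eq, EmbeddingLike.apply_eq_iff_eq]
  exact ⟨fun h => hc a b h, fun h => h.ne⟩

lemma complete_of_iso {n : ℕ} (f : G ≃g (⊤ : SimpleGraph (Fin n))) :
    ∀ u v : V, u ≠ v → G.Adj u v := by
  intro u v huv
  rw [← f.map_rel_iff]
  simpa using f.toEquiv.injective.ne huv

lemma star_iso [Fintype V] (c : V)
    (hstar : ∀ u v : V, G.Adj u v ↔ (u = c ∧ v ≠ c) ∨ (v = c ∧ u ≠ c)) :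
    Nonempty (G ≃g completeBipartiteGraph (Fin 1) (Fin (Fintype.card V - 1))) := by
  classical
  have f1 : {x : V // x = c} ≃ Fin 1 := Fintype.equivFinOfCardEq (Fintype.card_subtype_eq c)
  have f2 : {x : V // ¬ x = c} ≃ Fin (Fintype.card V - 1) := Fintype.equivFinOfCardEq (by
    rw [Fintype.card_subtype_compl, Fintype.card_subtype_eq])
  refine ⟨⟨(Equiv.sumCompl (· = c)).symm.trans (Equiv.sumCongr f1 f2), ?_⟩⟩
  intro a b
  simp only [Equiv.trans_apply]
  by_cases ha : a = c
  · rw [Equiv.sumCompl_symm_apply_of_pos (p := (· = c)) ha]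
    by_cases hb : b = c
    · rw [Equiv.sumCompl_symm_apply_of_pos (p := (· = c)) hb]
      simp [hstar, ha, hb]
    · rw [Equiv.sumCompl_symm_apply_of_neg (p := (· = c)) hb]
      simp [hstar, ha, hb]
  · rw [Equiv.sumCompl_symm_apply_of_neg (p := (· = c)) ha]
    by_cases hb : b = c
    · rw [Equiv.sumCompl_symm_apply_of_pos (p := (· = c)) hb]
      simp [hstar, ha, hb]
    · rw [Equiv.sumCompl_symm_apply_of_neg (p := (· = c)) hb]
      simp [hstar, ha, hb]

lemma star_of_iso {n : ℕ} (f : G ≃g completeBipartiteGraph (Fin 1) (Fin n)) :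
    ∃ c : V, ∀ u v : V, G.Adj u v ↔ (u = c ∧ v ≠ c) ∨ (v = c ∧ u ≠ c) := by
  refine ⟨f.symm (Sum.inl 0), fun u v => ?_⟩
  rw [← f.map_rel_iff]
  have hL : ∀ x : Fin 1 ⊕ Fin n, x.isLeft = true ↔ x = Sum.inl 0 := by
    rintro (i | j)
    · simp [Subsingleton.elim i 0]
    · simp
  have hR : ∀ x : Fin 1 ⊕ Fin n, x.isRight = true ↔ x ≠ Sum.inl 0 := by
    rintro (i | j)
    · simp [Subsingleton.elim i 0]
    · simp
  have hkey : ∀ w : V, f w = Sum.inl 0 ↔ w = f.symm (Sum.inl 0) := by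
    intro w
    constructor
    · intro h; rw [← h]; simp
    · intro h; rw [h]; simp
  simp only [completeBipartiteGraph_adj, hL, hR, hkey, ne_eq]
  tauto

end Aux6

theorem stmt_16 {V : Type*} [Fintype V] (G : SimpleGraph V) (hG : G.Connected)
    (hn : 6 ≤ Fintype.card V) :
    etaP G = Fintype.card V ↔
      Nonempty (G ≃g (⊤ : SimpleGraph (Fin (Fintype.card V)))) ∨
      Nonempty (G ≃g completeBipartiteGraph (Fin 1) (Fin (Fintype.card V - 1))) := by
  constructor
  · intro h
    by_contra hcon
    push_neg at hcon
    have hnc : ∃ a b : V, a ≠ b ∧ ¬ G.Adj a b := by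
      by_contra hc
      push_neg at hc
      exact hcon.1.false (complete_iso hc).some
    have hns : ∀ c : V, ¬ ∀ p q : V, G.Adj p q ↔ (p = c ∧ q ≠ c) ∨ (q = c ∧ p ≠ c) :=
      fun c hs => hcon.2.false (star_iso c hs).some
    obtain ⟨u, v, w, x, y, huv, hwu, hwv, hdw, hx, hxv, hy, hyu⟩ :=
      exists_good_pair hG hnc hns
    obtain ⟨P, hP1, hP2, hP3, hP4⟩ := pair_partition hG huv hwu hwv hdw hx hxv hy hyu
    have hle : etaP G ≤ Fintype.card V - 1 := Nat.sInf_le ⟨P, hP1, hP2, hP3, hP4⟩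
    omega
  · intro hiso
    rcases hiso with hf | hf
    obtain ⟨f⟩ := hf
    swap
    obtain ⟨f⟩ := hf
    swap
    · exact etaP_eq_card hG (by omega) (fun P p r d => complete_parts hG (complete_of_iso f) p r)
    · obtain ⟨c, hstar⟩ := star_of_iso f
      exact etaP_eq_card hG (by omega) (fun P p r d => star_parts hG c hstar p r d)
end
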